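/- arXiv:2403.15842 — 9 statements merged into one kernel-verified Lean document; each statement's English description precedes it below -/
import Mathlib

section
/- Suppose that for each cluster system 𝒞 on a nonempty finite set X we are given a linear phylogenetic diversity index Φ_𝒞 on 𝒞. Then the following are equivalent: (i) for all cluster systems 𝒞 on X, Φ_𝒞 is the fair proportion index on 𝒞; (ii) for all cluster systems 𝒞 on X, Φ_𝒞 is a descendant diversity index that satisfies the neutrality condition and is downward continuous with respect to Φ_{𝒞∖{C}} for every C ∈ 𝒞 with 𝒞∖{C} ≠ ∅. -/
open Finset

/-- The set of children of a cluster `C` in a cluster system `𝒞`: the maximal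
members of `𝒞` strictly contained in `C`. -/
def ch {α : Type*} [DecidableEq α] (𝒞 : Finset (Finset α)) (C : Finset α) :
    Finset (Finset α) :=
  𝒞.filter fun C' => C' ⊂ C ∧ ∀ C'' ∈ 𝒞, ¬(C' ⊂ C'' ∧ C'' ⊂ C)

/-- The matrix `Γ_Φ` associated with a linear phylogenetic diversity index `Φ` on a
cluster system `𝒞`: `γ (C, x) = Φ(𝟙_C)(x)`, i.e. the unique matrix with
`(Φ ω) x = ∑_{C ∈ 𝒞} ω C * γ (C, x)`. -/
noncomputable def gam {α : Type*} [Fintype α] [DecidableEq α] (𝒞 : Finset (Finset α))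
    (Φ : (↥𝒞 → ℝ) →ₗ[ℝ] (α → ℝ)) (C : ↥𝒞) (x : α) : ℝ :=
  Φ (fun D => if D = C then 1 else 0) x

/-- Any linear phylogenetic diversity index is determined by its matrix. -/
lemma indicator_decomp {α : Type*} [Fintype α] [DecidableEq α] (𝒞 : Finset (Finset α))
    (Φ : (↥𝒞 → ℝ) →ₗ[ℝ] (α → ℝ)) (ω : ↥𝒞 → ℝ) (x : α) :
    Φ ω x = ∑ C : ↥𝒞, ω C * gam 𝒞 Φ C x := by
  have hω : ω = ∑ C : ↥𝒞, ω C • (fun D => if D = C then (1:ℝ) else 0) := by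
    funext D
    simp [Finset.sum_apply]
  conv_lhs => rw [hω]
  rw [map_sum]
  simp [gam, Finset.sum_apply]

/-- Under the conditions of (ii), the matrix of each `Φ_𝒞` is the fair proportion
matrix. Proven by induction on the size of `𝒞`. -/
lemma key {α : Type*} [Fintype α] [DecidableEq α]
    (Φ : ∀ 𝒞 : Finset (Finset α), (↥𝒞 → ℝ) →ₗ[ℝ] (α → ℝ))
    (hcomp : ∀ 𝒞 : Finset (Finset α), 𝒞.Nonempty → (∀ C ∈ 𝒞, C.Nonempty) →
      ∀ ω : ↥𝒞 → ℝ, ∑ x : α, Φ 𝒞 ω x = ∑ C : ↥𝒞, ω C)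
    (hsupp : ∀ 𝒞 : Finset (Finset α), 𝒞.Nonempty → (∀ C ∈ 𝒞, C.Nonempty) →
      ∀ (C : ↥𝒞) (x : α), x ∉ C.1 → gam 𝒞 (Φ 𝒞) C x = 0)
    (hneut : ∀ 𝒞 : Finset (Finset α), 𝒞.Nonempty → (∀ C ∈ 𝒞, C.Nonempty) →
      ∀ C : ↥𝒞, ch 𝒞 C.1 = ∅ → ∀ x ∈ C.1, ∀ y ∈ C.1,
        gam 𝒞 (Φ 𝒞) C x = gam 𝒞 (Φ 𝒞) C y)
    (hdown : ∀ 𝒞 : Finset (Finset α), 𝒞.Nonempty → (∀ C ∈ 𝒞, C.Nonempty) →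
      ∀ C ∈ 𝒞, (𝒞.erase C).Nonempty → ∀ ω : ↥𝒞 → ℝ,
        Filter.Tendsto (fun t : ℝ => Φ 𝒞 (fun D => if D.1 = C then t else ω D)) (nhds 0)
          (nhds (Φ (𝒞.erase C) (fun D => ω ⟨D.1, Finset.mem_of_mem_erase D.2⟩)))) :
    ∀ (n : ℕ) (𝒞 : Finset (Finset α)), 𝒞.card ≤ n → 𝒞.Nonempty → (∀ C ∈ 𝒞, C.Nonempty) →
      ∀ (C : ↥𝒞) (x : α),
        gam 𝒞 (Φ 𝒞) C x = if x ∈ C.1 then 1 / (C.1.card : ℝ) else 0 := by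
  intro n
  induction n with
  | zero =>
    intro 𝒞 hcard hne _ _ _
    rw [Finset.card_eq_zero.mp (Nat.le_zero.mp hcard)] at hne
    exact absurd hne (by simp)
  | succ n ih =>
    intro 𝒞 hcard hne hcl C x
    by_cases hex : ∃ C' ∈ 𝒞, C' ≠ C.1
    · obtain ⟨C', hC', hCC'⟩ := hex
      have hCmem : C.1 ∈ 𝒞.erase C' := Finset.mem_erase.2 ⟨fun h => hCC' h.symm, C.2⟩
      have hene : (𝒞.erase C').Nonempty := ⟨C.1, hCmem⟩
      have hδ : ∀ t : ℝ, (fun D : ↥𝒞 => if D.1 = C' then t else if D = C then (1:ℝ) else 0)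
          = (fun D : ↥𝒞 => if D = C then (1:ℝ) else 0)
            + t • (fun D : ↥𝒞 => if D.1 = C' then (1:ℝ) else 0) := by
        intro t; funext D
        by_cases hD : D.1 = C'
        · have hDC : D ≠ C := fun h => hCC' (((h ▸ hD) : C.1 = C').symm ▸ rfl)
          simp [hD, hDC]
        · simp [hD]
      have htend := hdown 𝒞 hne hcl C' hC' hene (fun D => if D = C then (1:ℝ) else 0)
      rw [show (fun t : ℝ => Φ 𝒞 fun D => if D.1 = C' then t else if D = C then (1:ℝ) else 0)
          = fun t : ℝ => Φ 𝒞 (fun D => if D = C then (1:ℝ) else 0)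
            + t • Φ 𝒞 (fun D => if D.1 = C' then (1:ℝ) else 0) from
          funext fun t => by rw [hδ t, map_add, map_smul]] at htend
      have htend2 : Filter.Tendsto
          (fun t : ℝ => Φ 𝒞 (fun D => if D = C then (1:ℝ) else 0)
            + t • Φ 𝒞 (fun D : ↥𝒞 => if D.1 = C' then (1:ℝ) else 0))
          (nhds 0) (nhds (Φ 𝒞 (fun D => if D = C then (1:ℝ) else 0))) := by
        have hc : Continuous fun t : ℝ => Φ 𝒞 (fun D => if D = C then (1:ℝ) else 0)
            + t • Φ 𝒞 (fun D : ↥𝒞 => if D.1 = C' then (1:ℝ) else 0) := by fun_prop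
        simpa using hc.tendsto 0
      have heq := tendsto_nhds_unique htend2 htend
      have hωstar : (fun D : ↥(𝒞.erase C') =>
            if (⟨D.1, Finset.mem_of_mem_erase D.2⟩ : ↥𝒞) = C then (1:ℝ) else 0)
          = fun D : ↥(𝒞.erase C') =>
            if D = (⟨C.1, hCmem⟩ : ↥(𝒞.erase C')) then (1:ℝ) else 0 := by
        funext D
        simp [Subtype.ext_iff]
      have hstep : gam 𝒞 (Φ 𝒞) C x = gam (𝒞.erase C') (Φ (𝒞.erase C')) ⟨C.1, hCmem⟩ x := by
        rw [gam, gam, heq, ← hωstar]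
      rw [hstep]
      have hcard' : (𝒞.erase C').card ≤ n := by
        rw [Finset.card_erase_of_mem hC']; omega
      exact ih (𝒞.erase C') hcard' hene (fun D hD => hcl D (Finset.mem_of_mem_erase hD))
        ⟨C.1, hCmem⟩ x
    · push_neg at hex
      have hch : ch 𝒞 C.1 = ∅ := by
        rw [Finset.eq_empty_iff_forall_notMem]
        intro D hD
        simp only [ch, Finset.mem_filter] at hD
        exact absurd (hex D hD.1 ▸ hD.2.1) (ssubset_irrefl _)
      have hsum1 : ∑ y : α, gam 𝒞 (Φ 𝒞) C y = 1 := by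
        have h := hcomp 𝒞 hne hcl (fun D => if D = C then 1 else 0)
        rw [show (∑ y : α, gam 𝒞 (Φ 𝒞) C y)
            = ∑ y : α, Φ 𝒞 (fun D => if D = C then 1 else 0) y from rfl, h]
        simp
      obtain ⟨x₀, hx₀⟩ := hcl C.1 C.2
      have hconst : ∀ y ∈ C.1, gam 𝒞 (Φ 𝒞) C y = gam 𝒞 (Φ 𝒞) C x₀ :=
        fun y hy => hneut 𝒞 hne hcl C hch y hy x₀ hx₀
      have hsum2 : ∑ y : α, gam 𝒞 (Φ 𝒞) C y = (C.1.card : ℝ) * gam 𝒞 (Φ 𝒞) C x₀ := by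
        rw [← Finset.sum_subset (Finset.subset_univ C.1)
          (fun y _ hy => hsupp 𝒞 hne hcl C y hy)]
        rw [Finset.sum_congr rfl hconst, Finset.sum_const, nsmul_eq_mul]
      have hcard0 : (C.1.card : ℝ) ≠ 0 :=
        Nat.cast_ne_zero.2 (Finset.card_ne_zero_of_mem hx₀)
      have hx₀val : gam 𝒞 (Φ 𝒞) C x₀ = 1 / (C.1.card : ℝ) := by
        rw [hsum2] at hsum1
        field_simp at hsum1 ⊢
        linarith [hsum1]
      by_cases hx : x ∈ C.1
      · rw [if_pos hx, hconst x hx, hx₀val]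
      · rw [if_neg hx, hsupp 𝒞 hne hcl C x hx]

/-- Characterization of the fair proportion index: a family of linear phylogenetic
diversity indices (one for each cluster system on `X`) is the family of fair
proportion indices iff each member is a descendant diversity index satisfying the
neutrality condition that is downward continuous with respect to the index on
`𝒞 \ {C}` for each `C ∈ 𝒞` with `𝒞 \ {C} ≠ ∅`. -/
theorem stmt2 {α : Type*} [Fintype α] [DecidableEq α] [Nonempty α]
    (Φ : ∀ 𝒞 : Finset (Finset α), (↥𝒞 → ℝ) →ₗ[ℝ] (α → ℝ)) :
    -- (i) each Φ_𝒞 is the fair proportion index on 𝒞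
    (∀ 𝒞 : Finset (Finset α), 𝒞.Nonempty → (∀ C ∈ 𝒞, C.Nonempty) →
        ∀ (ω : ↥𝒞 → ℝ) (x : α),
          Φ 𝒞 ω x = ∑ C : ↥𝒞, if x ∈ C.1 then ω C / (C.1.card : ℝ) else 0)
    ↔
    -- (ii)
    (∀ 𝒞 : Finset (Finset α), 𝒞.Nonempty → (∀ C ∈ 𝒞, C.Nonempty) →
        -- Φ_𝒞 is a descendant diversity index:
        ((∀ ω : ↥𝒞 → ℝ, ∑ x : α, Φ 𝒞 ω x = ∑ C : ↥𝒞, ω C)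
          ∧ (∀ (C : ↥𝒞) (x : α), 0 ≤ gam 𝒞 (Φ 𝒞) C x)
          ∧ (∀ (C : ↥𝒞) (x : α), x ∉ C.1 → gam 𝒞 (Φ 𝒞) C x = 0))
        -- Φ_𝒞 satisfies the neutrality condition:
        ∧ (∀ C : ↥𝒞, ch 𝒞 C.1 = ∅ →
            ∀ x ∈ C.1, ∀ y ∈ C.1, gam 𝒞 (Φ 𝒞) C x = gam 𝒞 (Φ 𝒞) C y)
        -- Φ_𝒞 is downward continuous w.r.t. Φ_{𝒞∖{C}} for all C ∈ 𝒞 with 𝒞∖{C} ≠ ∅: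
        ∧ (∀ C ∈ 𝒞, (𝒞.erase C).Nonempty →
            ∀ ω : ↥𝒞 → ℝ,
              Filter.Tendsto
                (fun t : ℝ => Φ 𝒞 (fun D => if D.1 = C then t else ω D))
                (nhds 0)
                (nhds (Φ (𝒞.erase C)
                  (fun D => ω ⟨D.1, Finset.mem_of_mem_erase D.2⟩))))) := by
  constructor
  · -- (i) → (ii)
    intro h 𝒞 hne hcl
    have hΦ := h 𝒞 hne hcl
    have hgam : ∀ (C : ↥𝒞) (x : α),
        gam 𝒞 (Φ 𝒞) C x = if x ∈ C.1 then 1 / (C.1.card : ℝ) else 0 := by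
      intro C x
      have hterm : ∀ D : ↥𝒞,
          (if x ∈ D.1 then (if D = C then (1:ℝ) else 0) / (D.1.card : ℝ) else 0)
          = if D = C then (if x ∈ C.1 then 1 / (C.1.card : ℝ) else 0) else 0 := by
        intro D
        by_cases hD : D = C
        · subst hD; simp
        · simp [hD]
      rw [gam, hΦ, Finset.sum_congr rfl fun D _ => hterm D]
      simp
    refine ⟨⟨fun ω => ?_, fun C x => ?_, fun C x hx => ?_⟩,
      fun C _ x hx y hy => ?_, fun C hC hene ω => ?_⟩
    · -- completeness
      simp only [hΦ]
      rw [Finset.sum_comm]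
      refine Finset.sum_congr rfl fun D _ => ?_
      rw [Finset.sum_ite_mem, Finset.univ_inter, Finset.sum_const, nsmul_eq_mul]
      have h0 : (D.1.card : ℝ) ≠ 0 :=
        Nat.cast_ne_zero.2 (Finset.card_ne_zero.2 (hcl D.1 D.2))
      field_simp
    · -- non-negativity
      rw [hgam]
      split_ifs
      · positivity
      · exact le_refl 0
    · -- support condition
      rw [hgam, if_neg hx]
    · -- neutrality
      rw [hgam, hgam, if_pos hx, if_pos hy]
    · -- downward continuity
      classical
      have hcl' : ∀ D ∈ 𝒞.erase C, D.Nonempty :=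
        fun D hD => hcl D (Finset.mem_of_mem_erase hD)
      rw [tendsto_pi_nhds]
      intro x
      simp only [h 𝒞 hne hcl, h (𝒞.erase C) hene hcl']
      set G : Finset α → ℝ := fun S =>
        if x ∈ S then (if S = C then 0 else if hS : S ∈ 𝒞 then ω ⟨S, hS⟩ else 0) / (S.card : ℝ)
        else 0 with hG
      have hcont : Continuous fun t : ℝ =>
          ∑ D : ↥𝒞, if x ∈ D.1 then (if D.1 = C then t else ω D) / (D.1.card : ℝ) else 0 := by
        apply continuous_finset_sum
        intro D _
        by_cases h1 : x ∈ D.1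
        · by_cases h2 : D.1 = C
          · simp only [if_pos h1, if_pos h2]; fun_prop
          · simp only [if_pos h1, if_neg h2]; fun_prop
        · simp only [if_neg h1]; fun_prop
      have h0 := hcont.tendsto 0
      have hval : (∑ D : ↥𝒞,
            if x ∈ D.1 then (if D.1 = C then (0:ℝ) else ω D) / (D.1.card : ℝ) else 0)
          = ∑ D : ↥(𝒞.erase C),
              if x ∈ D.1 then ω ⟨D.1, Finset.mem_of_mem_erase D.2⟩ / (D.1.card : ℝ) else 0 := by
        have hL : (∑ D : ↥𝒞,
              if x ∈ D.1 then (if D.1 = C then (0:ℝ) else ω D) / (D.1.card : ℝ) else 0)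
            = ∑ D : ↥𝒞, G D.1 := by
          refine Finset.sum_congr rfl fun D _ => ?_
          simp [hG, D.2]
        have hR : (∑ D : ↥(𝒞.erase C),
              if x ∈ D.1 then ω ⟨D.1, Finset.mem_of_mem_erase D.2⟩ / (D.1.card : ℝ) else 0)
            = ∑ D : ↥(𝒞.erase C), G D.1 := by
          refine Finset.sum_congr rfl fun D _ => ?_
          simp [hG, (Finset.mem_erase.1 D.2).1, Finset.mem_of_mem_erase D.2]
        rw [hL, hR, Finset.sum_coe_sort 𝒞 G, Finset.sum_coe_sort (𝒞.erase C) G,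
          ← Finset.sum_erase 𝒞 (by simp [hG] : G C = 0)]
      rw [← hval]
      convert h0 using 2
  · -- (ii) → (i)
    intro h 𝒞 hne hcl ω x
    have hkey := key Φ (fun 𝒞 h1 h2 => (h 𝒞 h1 h2).1.1) (fun 𝒞 h1 h2 => (h 𝒞 h1 h2).1.2.2)
      (fun 𝒞 h1 h2 => (h 𝒞 h1 h2).2.1) (fun 𝒞 h1 h2 => (h 𝒞 h1 h2).2.2)
      𝒞.card 𝒞 le_rfl hne hcl
    rw [indicator_decomp]
    refine Finset.sum_congr rfl fun C _ => ?_
    rw [hkey C x]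
    by_cases hx : x ∈ C.1
    · rw [if_pos hx, if_pos hx, mul_one_div]
    · rw [if_neg hx, if_neg hx, mul_zero]
end

section
/- For every cluster system 𝒞 on a nonempty finite set X, the set 𝕡𝔻(𝒞) is a linear subspace of ℝ^{𝒫(X)} of dimension |𝒞|; more precisely, 𝕡𝔻(𝒞) is the linear span of the games {g_C : C ∈ 𝒞}, and these games are linearly independent. -/
open Finset

/-- The game `g_C` associated with a nonempty subset `C ⊆ X`:
`g_C(M) = 1` if `C ∩ M ≠ ∅` and `g_C(M) = 0` otherwise. -/
noncomputable def gC {α : Type*} [DecidableEq α] (C : Finset α) : Finset α → ℝ :=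
  fun M => if (C ∩ M).Nonempty then 1 else 0

/-- The set `𝕡𝔻(𝒞)` of games arising as `PD_ω` for some weighting `ω` of `𝒞`,
where `PD_ω(M) = ∑_{C ∈ 𝒞, M ∩ C ≠ ∅} ω(C)`. -/
def PDset {α : Type*} [DecidableEq α] (𝒞 : Finset (Finset α)) :
    Set (Finset α → ℝ) :=
  {g | ∃ ω : ↥𝒞 → ℝ, g = fun M => ∑ C : ↥𝒞, if (M ∩ C.1).Nonempty then ω C else 0}

lemma indep_aux {α : Type*} [Fintype α] [DecidableEq α]
    (𝒞 : Finset (Finset α)) (h𝒞' : ∀ C ∈ 𝒞, C.Nonempty) :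
    LinearIndependent ℝ (fun C : ↥𝒞 => gC C.1) := by
  rw [Fintype.linearIndependent_iff]
  intro c hc
  by_contra hne
  push_neg at hne
  obtain ⟨C1, hC1⟩ := hne
  have hS : (Finset.univ.filter (fun C : ↥𝒞 => c C ≠ 0)).Nonempty :=
    ⟨C1, by simp [hC1]⟩
  obtain ⟨C0, hC0mem, hC0min⟩ := Finset.exists_min_image _ (fun C : ↥𝒞 => C.1.card) hS
  simp only [Finset.mem_filter, Finset.mem_univ, true_and] at hC0mem hC0min
  have h1 := congrFun hc Finset.univ
  have h2 := congrFun hc (Finset.univ \ C0.1)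
  simp only [Pi.smul_apply, smul_eq_mul, Finset.sum_apply, Pi.zero_apply, gC] at h1 h2
  have e1 : ∑ C : ↥𝒞, c C = 0 := by
    rw [← h1]
    apply Finset.sum_congr rfl
    intro C _
    have : (C.1 ∩ Finset.univ).Nonempty := by
      simpa using h𝒞' C.1 C.2
    simp [this, h𝒞' C.1 C.2]
  have e2 : ∑ C : ↥𝒞, (if C.1 ⊆ C0.1 then (0:ℝ) else c C) = 0 := by
    refine Eq.trans (Finset.sum_congr rfl fun C _ => ?_) h2
    have hiff : (C.1 ∩ (Finset.univ \ C0.1)).Nonempty ↔ ¬ C.1 ⊆ C0.1 := by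
      constructor
      · rintro ⟨x, hx⟩ hsub
        simp only [Finset.mem_inter, Finset.mem_sdiff, Finset.mem_univ, true_and] at hx
        exact hx.2 (hsub hx.1)
      · intro hsub
        rw [Finset.not_subset] at hsub
        obtain ⟨x, hxC, hxC0⟩ := hsub
        exact ⟨x, by simp [hxC, hxC0]⟩
    by_cases h : C.1 ⊆ C0.1
    · rw [if_neg (fun hn => hiff.mp hn h), if_pos h, mul_zero]
    · rw [if_pos (hiff.mpr h), if_neg h, mul_one]
  have e3 : ∑ C : ↥𝒞, (if C.1 ⊆ C0.1 then c C else 0) = 0 := by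
    have key : ∀ C : ↥𝒞, (if C.1 ⊆ C0.1 then c C else 0)
        = c C - (if C.1 ⊆ C0.1 then 0 else c C) := by
      intro C; by_cases h : C.1 ⊆ C0.1 <;> simp [h]
    simp_rw [key]
    rw [Finset.sum_sub_distrib, e1, e2, sub_zero]
  have e4 : ∑ C : ↥𝒞, (if C.1 ⊆ C0.1 then c C else 0) = c C0 := by
    have := Finset.sum_eq_single_of_mem (f := fun C : ↥𝒞 => if C.1 ⊆ C0.1 then c C else 0)
      C0 (Finset.mem_univ _) (fun C _ hne => ?_)
    · rw [this]; simp
    · by_cases h : C.1 ⊆ C0.1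
      · simp only [h, if_true]
        by_contra hcC
        have hcard := hC0min C hcC
        have : C.1 = C0.1 := Finset.eq_of_subset_of_card_le h hcard
        exact hne (Subtype.ext this)
      · simp [h]
  exact hC0mem (e4 ▸ e3)

/-- `𝕡𝔻(𝒞)` is a linear subspace of `ℝ^{𝒫(X)}` of dimension `|𝒞|`: it is the span
of the games `g_C`, `C ∈ 𝒞`, and these games are linearly independent. -/
theorem stmt3 {α : Type*} [Fintype α] [DecidableEq α] [Nonempty α]
    (𝒞 : Finset (Finset α)) (h𝒞 : 𝒞.Nonempty) (h𝒞' : ∀ C ∈ 𝒞, C.Nonempty) :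
    ∃ W : Submodule ℝ (Finset α → ℝ),
      (W : Set (Finset α → ℝ)) = PDset 𝒞
      ∧ W = Submodule.span ℝ (Set.range fun C : ↥𝒞 => gC C.1)
      ∧ LinearIndependent ℝ (fun C : ↥𝒞 => gC C.1)
      ∧ Module.finrank ℝ W = 𝒞.card := by
  refine ⟨Submodule.span ℝ (Set.range fun C : ↥𝒞 => gC C.1), ?_, rfl,
    indep_aux 𝒞 h𝒞', ?_⟩
  · ext g
    rw [SetLike.mem_coe, Submodule.mem_span_range_iff_exists_fun ℝ]
    constructor
    · rintro ⟨ω, hω⟩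
      refine ⟨ω, ?_⟩
      rw [← hω]
      funext M
      simp only [Finset.sum_apply, Pi.smul_apply, smul_eq_mul, gC]
      apply Finset.sum_congr rfl
      intro C _
      rw [Finset.inter_comm]
      by_cases h : (M ∩ C.1).Nonempty <;> simp [h]
    · rintro ⟨ω, hω⟩
      refine ⟨ω, ?_⟩
      rw [hω]
      funext M
      simp only [Finset.sum_apply, Pi.smul_apply, smul_eq_mul, gC]
      apply Finset.sum_congr rfl
      intro C _
      rw [Finset.inter_comm]
      by_cases h : (M ∩ C.1).Nonempty <;> simp [h]
  · rw [finrank_span_eq_card (indep_aux 𝒞 h𝒞'), Fintype.card_coe]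
end

section
/- Let X be a nonempty finite set. The family of games (g_C), indexed by all nonempty subsets C of X, is linearly independent in ℝ^{𝒫(X)}; equivalently, the intersection matrix A of 𝒫(X)∖{∅}, whose (C,M)-entry is 1 if C∩M≠∅ and 0 otherwise, has full rank. -/
open Finset

lemma key_aux {α : Type*} [Fintype α] [DecidableEq α] [Nonempty α] (d : Finset α → ℝ)
    (hd0 : d ∅ = 0)
    (h : ∀ M : Finset α, M.Nonempty →
      ∑ C : Finset α, d C * (if (C ∩ M).Nonempty then (1:ℝ) else 0) = 0) :
    ∀ C, d C = 0 := by
  have hT : ∑ C : Finset α, d C = 0 := by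
    have := h univ univ_nonempty
    rw [← this]
    refine Finset.sum_congr rfl fun C _ => ?_
    rcases eq_or_ne C ∅ with rfl | hC
    · simp [hd0]
    · simp [Finset.inter_univ, Finset.nonempty_iff_ne_empty.mpr hC]
  have hpow : ∀ S : Finset α, ∑ C ∈ S.powerset, d C = 0 := by
    intro S
    have hfilter : ∑ C ∈ S.powerset, d C
        = ∑ C : Finset α, (if C ⊆ S then d C else 0) := by
      rw [← Finset.sum_filter]
      refine Finset.sum_congr ?_ fun _ _ => rfl
      ext C; simp [Finset.mem_powerset]
    by_cases hS : Sᶜ.Nonempty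
    · have h1 := h Sᶜ hS
      have h2 : ∀ C : Finset α,
          d C * (if (C ∩ Sᶜ).Nonempty then (1:ℝ) else 0)
            = d C - (if C ⊆ S then d C else 0) := by
        intro C
        by_cases hCS : C ⊆ S
        · have : C ∩ Sᶜ = ∅ := by
            ext a
            simp only [Finset.mem_inter, Finset.mem_compl, Finset.notMem_empty, iff_false,
              not_and, not_not]
            exact fun ha => hCS ha
          simp [this, hCS]
        · have : (C ∩ Sᶜ).Nonempty := by
            obtain ⟨a, haC, haS⟩ := Finset.not_subset.mp hCS
            exact ⟨a, Finset.mem_inter.mpr ⟨haC, Finset.mem_compl.mpr haS⟩⟩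
          simp [this, hCS]
      rw [Finset.sum_congr rfl fun C _ => h2 C, Finset.sum_sub_distrib, hT] at h1
      rw [hfilter]
      linarith
    · have hSu : S = univ := by
        rw [Finset.not_nonempty_iff_eq_empty, Finset.compl_eq_empty_iff] at hS
        exact hS
      rw [hSu, Finset.powerset_univ]
      exact hT
  intro C
  induction C using Finset.strongInduction with
  | _ C ih =>
    have h1 := hpow C
    rw [← Finset.add_sum_erase _ _ (Finset.mem_powerset_self C)] at h1
    have h2 : ∑ x ∈ (C.powerset).erase C, d x = 0 := by
      refine Finset.sum_eq_zero fun x hx => ?_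
      rw [Finset.mem_erase, Finset.mem_powerset] at hx
      exact ih x (lt_of_le_of_ne hx.2 hx.1)
    linarith

/-- The family of games `(g_C)`, indexed by all nonempty subsets `C` of `X`, is
linearly independent in `ℝ^{𝒫(X)}`; equivalently, the intersection matrix of
`𝒫(X) ∖ {∅}` has full rank. -/
theorem stmt4 {α : Type*} [Fintype α] [DecidableEq α] [Nonempty α] :
    LinearIndependent ℝ (fun C : {C : Finset α // C.Nonempty} => gC C.1)
    ∧ (Matrix.of fun C M : {C : Finset α // C.Nonempty} =>
          if (C.1 ∩ M.1).Nonempty then (1 : ℝ) else 0).rank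
        = Fintype.card {C : Finset α // C.Nonempty} := by
  have hli : LinearIndependent ℝ (fun C : {C : Finset α // C.Nonempty} =>
      (fun M : {M : Finset α // M.Nonempty} =>
        if (C.1 ∩ M.1).Nonempty then (1:ℝ) else 0)) := by
    rw [Fintype.linearIndependent_iff]
    intro c hc C
    set d : Finset α → ℝ := fun B => if hB : B.Nonempty then c ⟨B, hB⟩ else 0 with hd
    have hall : ∀ B, d B = 0 := by
      refine key_aux d (by simp [hd]) fun M hM => ?_
      have h1 := congrFun hc ⟨M, hM⟩
      simp only [Finset.sum_apply, Pi.smul_apply, Pi.zero_apply, smul_eq_mul] at h1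
      have e1 : ∑ B ∈ univ.filter (fun B : Finset α => B.Nonempty),
            d B * (if (B ∩ M).Nonempty then (1:ℝ) else 0)
          = ∑ B : Finset α, d B * (if (B ∩ M).Nonempty then (1:ℝ) else 0) := by
        refine Finset.sum_subset (Finset.filter_subset _ _) fun B _ hB => ?_
        rw [Finset.mem_filter, not_and] at hB
        have : ¬ B.Nonempty := hB (Finset.mem_univ B)
        simp [hd, this]
      have e2 : ∑ B : Finset α, d B * (if (B ∩ M).Nonempty then (1:ℝ) else 0)
          = ∑ x : {C : Finset α // C.Nonempty},
              c x * (if (x.1 ∩ M).Nonempty then (1:ℝ) else 0) := by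
        rw [← e1, Finset.sum_subtype (p := fun B : Finset α => B.Nonempty)
          (univ.filter fun B : Finset α => B.Nonempty) (by simp)
          (fun B => d B * (if (B ∩ M).Nonempty then (1:ℝ) else 0))]
        refine Finset.sum_congr rfl fun x _ => ?_
        simp [hd, x.2]
      rw [e2]
      exact h1
    have := hall C.1
    simpa [hd, C.2] using this
  refine ⟨?_, hli.rank_matrix⟩
  exact LinearIndependent.of_comp
    (LinearMap.funLeft ℝ ℝ (Subtype.val : {M : Finset α // M.Nonempty} → Finset α)) hli
end

section
/- For every nonempty finite set X, every nonempty subset C ⊆ X, every a ∈ ℝ, and every x ∈ X, the Shapley value of the scaled game a·g_C satisfies (SV(a·g_C))(x) = a/|C| if x ∈ C, and (SV(a·g_C))(x) = 0 if x ∉ C. -/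
open Finset

/-- The Shapley value of a game `g : 𝒫(X) → ℝ`:
`(SV g)(x) = (1/|X|!) ∑_{M ⊆ X, x ∈ M} (|M|-1)!(|X|-|M|)!(g(M) - g(M ∖ {x}))`. -/
noncomputable def SV {α : Type*} [Fintype α] [DecidableEq α]
    (g : Finset α → ℝ) (x : α) : ℝ :=
  (1 / (Nat.factorial (Fintype.card α) : ℝ)) *
    ∑ M ∈ Finset.univ.filter (fun M : Finset α => x ∈ M),
      (Nat.factorial (M.card - 1) : ℝ) * (Nat.factorial (Fintype.card α - M.card) : ℝ) *
        (g M - g (M.erase x))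

/-!
The Shapley value is linear in the game, so it suffices to treat `g_C`. A player outside `C`
never changes `g_C`. For `x ∈ C`, the marginal contribution of `x` to a coalition `M ∋ x` is `1`
exactly when `M ∖ {x}` avoids `C`, so `SV(g_C)(x)` is `Σ_{S ⊆ X ∖ C} |S|! (n - 1 - |S|)! / n!`
with `n = |X|`. Grouping by `s = |S|`, with `m = |X ∖ C|` and `c = |C| - 1`, and writing
`(m choose s) s! (c + m - s)! = m! c! (c + m - s choose c)`, the hockey-stick identity sums this
to `n! / |C|`.
-/

namespace Nat

theorem choose_mul_factorial_mul_factorial_add {m s : ℕ} (c : ℕ) (hs : s ≤ m) :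
    m.choose s * s ! * (c + m - s)! = m ! * c ! * (m - s + c).choose c := by
  rw [show c + m - s = m - s + c by omega, ← add_choose_mul_factorial_mul_factorial (m - s) c,
    ← choose_mul_factorial_mul_factorial hs]
  ring

theorem succ_mul_sum_choose_mul_factorial_mul_factorial (c m : ℕ) :
    (c + 1) * ∑ s ∈ range (m + 1), m.choose s * s ! * (c + m - s)! = (c + m + 1)! := by
  have hsum : ∑ s ∈ range (m + 1), m.choose s * s ! * (c + m - s)!
      = m ! * c ! * (m + (c + 1)).choose (c + 1) := by
    rw [sum_congr rfl fun s hs =>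
        choose_mul_factorial_mul_factorial_add c (mem_range_succ_iff.mp hs),
      ← mul_sum, ← add_assoc, ← sum_range_add_choose, ← sum_range_reflect]
    refine congrArg _ (sum_congr rfl fun s hs => ?_)
    have hs' := mem_range.mp hs
    congr 2
    omega
  rw [hsum, show c + m + 1 = m + (c + 1) by ring, ← add_choose_mul_factorial_mul_factorial,
    factorial_succ]
  ring

end Nat

section
variable {α : Type*} [Fintype α] [DecidableEq α]
open Nat

theorem Finset.sum_filter_erase_subset_eq_sum_powerset {β : Type*} [AddCommMonoid β]
    {T : Finset α} {x : α} (hx : x ∉ T) (f : Finset α → β) :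
    ∑ M ∈ (univ.filter (x ∈ ·)).filter (·.erase x ⊆ T), f M = ∑ S ∈ T.powerset, f (insert x S) := by
  have hxS : ∀ S ∈ T.powerset, x ∉ S := fun S hS h => hx (mem_powerset.mp hS h)
  refine sum_nbij' (·.erase x) (insert x) ?_ ?_ ?_ ?_ ?_ <;> intro S hS
  · simp_all
  · simp_all [erase_insert (hxS S hS)]
  · simp_all
  · exact erase_insert (hxS S hS)
  · simp_all

theorem SV_const_mul (a : ℝ) (g : Finset α → ℝ) (x : α) :
    SV (fun M => a * g M) x = a * SV g x := by
  simp only [SV, mul_sum]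
  exact sum_congr rfl fun M _ => by ring

theorem SV_eq_zero_of_erase_eq {g : Finset α → ℝ} {x : α} (h : ∀ M, g (M.erase x) = g M) :
    SV g x = 0 := by
  simp [SV, h]

omit [Fintype α] in
theorem gC_erase_of_notMem {C : Finset α} {x : α} (hx : x ∉ C) (M : Finset α) :
    gC C (M.erase x) = gC C M := by
  rw [gC, gC, inter_erase, erase_eq_of_notMem fun h => hx (mem_inter.mp h).1]

theorem gC_sub_gC_erase_of_mem {C M : Finset α} {x : α} (hxC : x ∈ C) (hxM : x ∈ M) :
    gC C M - gC C (M.erase x) = if M.erase x ⊆ Cᶜ then 1 else 0 := by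
  have hCM : (C ∩ M).Nonempty := ⟨x, mem_inter.mpr ⟨hxC, hxM⟩⟩
  rw [gC, gC, if_pos hCM]
  simp only [← not_disjoint_iff_nonempty_inter, subset_compl_iff_disjoint_left]
  split_ifs <;> norm_num

theorem SV_gC_of_mem {C : Finset α} {x : α} (hx : x ∈ C) : SV (gC C) x = 1 / C.card := by
  obtain ⟨c, hc⟩ := Nat.exists_eq_add_one_of_ne_zero (card_ne_zero_of_mem hx)
  set m := Cᶜ.card
  have hn : Fintype.card α = c + m + 1 := by
    rw [← card_add_card_compl C, hc]
    ring
  have hfactorial : ((c + 1 : ℕ) : ℝ) * ∑ s ∈ range (m + 1), ((m.choose s * s ! * (c + m - s)! : ℕ) : ℝ)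
      = (c + m + 1)! := by
    exact_mod_cast Nat.succ_mul_sum_choose_mul_factorial_mul_factorial c m
  have hxC : x ∉ Cᶜ := by simpa using hx
  have hmarginal : ∀ M ∈ univ.filter (x ∈ ·),
      ((#M - 1)! : ℝ) * (Fintype.card α - #M)! * (gC C M - gC C (M.erase x))
        = if M.erase x ⊆ Cᶜ then ((#M - 1)! : ℝ) * (Fintype.card α - #M)! else 0 := fun M hM => by
    rw [gC_sub_gC_erase_of_mem hx (mem_filter.mp hM).2, mul_ite, mul_one, mul_zero]
  rw [SV, sum_congr rfl hmarginal, ← sum_filter, sum_filter_erase_subset_eq_sum_powerset hxC]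
  rw [sum_congr rfl fun S hS => by
    rw [card_insert_of_notMem fun h => hxC (mem_powerset.mp hS h), Nat.add_sub_cancel, hn,
      Nat.add_sub_add_right]]
  rw [sum_powerset_apply_card (fun s => (s ! : ℝ) * (c + m - s)!), hc, hn]
  push_cast at hfactorial ⊢
  simp only [nsmul_eq_mul, ← mul_assoc]
  field_simp
  linarith
end

theorem stmt5_general {α : Type*} [Fintype α] [DecidableEq α]
    (C : Finset α) (a : ℝ) (x : α) :
    SV (fun M => a * gC C M) x = if x ∈ C then a / (C.card : ℝ) else 0 := by
  rw [SV_const_mul]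
  split_ifs with hx
  · rw [SV_gC_of_mem hx, mul_one_div]
  · rw [SV_eq_zero_of_erase_eq (gC_erase_of_notMem hx), mul_zero]

/-- The Shapley value of the scaled game `a · g_C` is `a/|C|` at members of `C`
and `0` elsewhere. -/
theorem stmt5 {α : Type*} [Fintype α] [DecidableEq α] [Nonempty α]
    (C : Finset α) (hC : C.Nonempty) (a : ℝ) (x : α) :
    SV (fun M => a * gC C M) x = if x ∈ C then a / (C.card : ℝ) else 0 :=
  stmt5_general C a x
end

section
/- For every nonempty finite set X and every game g : 𝒫(X) → ℝ, the Shapley value satisfies Σ_{x∈X} (SV(g))(x) = g(X) − g(∅). -/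
/-!
Expanding `∑ₓ SV g x`, a coalition `M` contributes `g M` once for each `x ∈ M`, with weight
`(|M| - 1)! (n - |M|)!`, and `-g M` once for each `x ∉ M` (as `M = (M ∪ {x}) ∖ {x}`), with weight
`|M|! (n - |M| - 1)!`. Both totals equal `|M|! (n - |M|)!`, except that the first vanishes for
`M = ∅` and the second for `M = X`; so everything cancels except `n! (g X - g ∅)`.
-/

open Finset

open scoped Nat

section

variable {α β : Type*} [Fintype α] [AddCommMonoid β]

theorem Finset.sum_sum_filter_eq_sum_card_nsmul (p : α → Finset α → Prop)
    [∀ x M, Decidable (p x M)] (f : Finset α → β) :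
    ∑ x, ∑ M ∈ univ.filter (p x), f M = ∑ M, #{x | p x M} • f M := by
  simp only [sum_filter]
  rw [sum_comm]
  simp [← sum_filter]

variable [DecidableEq α]

theorem Finset.sum_filter_mem_eq_sum_filter_notMem_insert (x : α) (f : Finset α → β) :
    ∑ M ∈ univ.filter (fun M : Finset α => x ∈ M), f M =
      ∑ N ∈ univ.filter (fun N : Finset α => x ∉ N), f (insert x N) :=
  sum_nbij' (fun M => M.erase x) (fun N => insert x N) (by simp) (by simp)
    (by simp +contextual) (by simp +contextual) (by simp +contextual)

end

section

variable {α : Type*} [Fintype α] [DecidableEq α]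

theorem sum_sum_filter_mem_factorial_mul (g : Finset α → ℝ) :
    ∑ x, ∑ M ∈ univ.filter (fun M : Finset α => x ∈ M),
        ((M.card - 1)! : ℝ) * (Fintype.card α - M.card)! * g M =
      ∑ M ∈ univ.erase ∅, (M.card ! : ℝ) * (Fintype.card α - M.card)! * g M := by
  rw [sum_sum_filter_eq_sum_card_nsmul (fun x M => x ∈ M)]
  rw [← sum_erase _ (a := ∅) (by simp)]
  refine sum_congr rfl fun M hM => ?_
  have hcard : M.card ≠ 0 := card_ne_zero.2 (nonempty_iff_ne_empty.2 (ne_of_mem_erase hM))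
  rw [filter_mem_eq_inter, univ_inter, nsmul_eq_mul, ← Nat.mul_factorial_pred hcard]
  push_cast
  ring

theorem sum_sum_filter_mem_factorial_mul_erase (g : Finset α → ℝ) :
    ∑ x, ∑ M ∈ univ.filter (fun M : Finset α => x ∈ M),
        ((M.card - 1)! : ℝ) * (Fintype.card α - M.card)! * g (M.erase x) =
      ∑ N ∈ univ.erase univ, (N.card ! : ℝ) * (Fintype.card α - N.card)! * g N := by
  have hreindex : ∀ x, ∑ M ∈ univ.filter (fun M : Finset α => x ∈ M),
        ((M.card - 1)! : ℝ) * (Fintype.card α - M.card)! * g (M.erase x) =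
      ∑ N ∈ univ.filter (fun N : Finset α => x ∉ N),
        (N.card ! : ℝ) * (Fintype.card α - N.card - 1)! * g N := by
    intro x
    rw [sum_filter_mem_eq_sum_filter_notMem_insert]
    refine sum_congr rfl fun N hN => ?_
    have hx : x ∉ N := (mem_filter.1 hN).2
    rw [card_insert_of_notMem hx, erase_insert hx, Nat.add_sub_cancel, Nat.sub_sub]
  simp only [hreindex]
  rw [sum_sum_filter_eq_sum_card_nsmul (fun x N => x ∉ N)]
  rw [← sum_erase _ (a := univ) (by simp)]
  refine sum_congr rfl fun N hN => ?_
  have hcompl : #{x | x ∉ N} = Fintype.card α - N.card := by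
    rw [← card_compl]
    congr 1
    ext
    simp
  have hpos : Fintype.card α - N.card ≠ 0 :=
    Nat.sub_ne_zero_of_lt ((card_lt_iff_ne_univ N).2 (ne_of_mem_erase hN))
  rw [hcompl, nsmul_eq_mul, ← Nat.mul_factorial_pred hpos]
  push_cast
  ring

end

theorem stmt6_general {α : Type*} [Fintype α] [DecidableEq α]
    (g : Finset α → ℝ) :
    ∑ x : α, SV g x = g Finset.univ - g ∅ := by
  have hfac : ((Fintype.card α)! : ℝ) ≠ 0 := by positivity
  simp only [SV, ← mul_sum, mul_sub, sum_sub_distrib, sum_sum_filter_mem_factorial_mul,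
    sum_sum_filter_mem_factorial_mul_erase, sum_erase_eq_sub (mem_univ _)]
  simp only [card_empty, card_univ, Nat.sub_zero, Nat.sub_self, Nat.factorial_zero, Nat.cast_one]
  field_simp
  ring

/-- For every game `g`, the Shapley values sum to `g(X) - g(∅)`. -/
theorem stmt6 {α : Type*} [Fintype α] [DecidableEq α] [Nonempty α]
    (g : Finset α → ℝ) :
    ∑ x : α, SV g x = g Finset.univ - g ∅ :=
  stmt6_general g
end

section
/- Let 𝒮 be a split system on a nonempty finite set X, let λ ∈ 𝕃(𝒮), and let x ∈ X. Then the Shapley value of the game PD_λ satisfies (SV(PD_λ))(x) = Σ_{A|B∈𝒮 with x∈A} (|B|/(|X|·|A|))·λ(A|B). -/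
open Finset

/-- A split of `X`: an unordered bipartition `{A, B}` of `X` into two nonempty parts. -/
def IsSplit {α : Type*} [Fintype α] [DecidableEq α] (S : Finset (Finset α)) : Prop :=
  ∃ A B : Finset α, A.Nonempty ∧ B.Nonempty ∧ A ∪ B = Finset.univ ∧ A ∩ B = ∅ ∧
    S = {A, B}

/-- The game `PD_λ` for a weighting `λ` of a split system `𝒮`:
`PD_λ(M) = ∑_{A|B ∈ 𝒮, A ∩ M ≠ ∅, B ∩ M ≠ ∅} λ(A|B)`. -/
noncomputable def PDs {α : Type*} [DecidableEq α] (𝒮 : Finset (Finset (Finset α)))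
    (lam : ↥𝒮 → ℝ) (M : Finset α) : ℝ :=
  ∑ S : ↥𝒮, if ∀ A ∈ S.1, (A ∩ M).Nonempty then lam S else 0

lemma tele (a b : ℕ) (ha : 1 ≤ a) (t : ℕ) :
    a * (b.choose t * t.factorial * (a + b - 1 - t).factorial)
      + b.choose (t+1) * (t+1).factorial * (a + b - (t+1)).factorial
    = b.choose t * t.factorial * (a + b - t).factorial := by
  rcases le_or_gt (t+1) b with h | h
  · have h1 : b.choose (t+1) * (t+1) = b.choose t * (b - t) := Nat.choose_succ_right_eq b t
    have h2 : a + b - t = (a + b - 1 - t) + 1 := by omega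
    have h3 : a + b - (t+1) = a + b - 1 - t := by omega
    rw [h3, h2, Nat.factorial_succ, Nat.factorial_succ]
    have h5 : b.choose (t+1) * ((t+1) * t.factorial) = b.choose t * (b-t) * t.factorial := by
      rw [← mul_assoc, h1]
    rw [h5]
    have h4 : a + (b - t) = a + b - 1 - t + 1 := by omega
    rw [← h4]; ring
  · have h1 : b.choose (t+1) = 0 := Nat.choose_eq_zero_of_lt h
    rcases lt_or_ge t b with h2 | h2
    · omega
    · have h3 : b.choose t = 0 ∨ t = b := by
        rcases Nat.lt_or_ge b t with h4 | h4
        · exact Or.inl (Nat.choose_eq_zero_of_lt h4)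
        · exact Or.inr (le_antisymm h4 h2)
      rcases h3 with h3 | h3
      · simp [h1, h3]
      · subst h3
        have h4 : a + t - 1 - t = a - 1 := by omega
        have h5 : a + t - t = a := by omega
        rw [h1, h4, h5, Nat.choose_self]
        have h6 : a * (a-1).factorial = a.factorial := Nat.mul_factorial_pred (by omega)
        calc a * (1 * t.factorial * (a-1).factorial) + 0 * (t+1).factorial * (a + t - (t+1)).factorial
            = t.factorial * (a * (a-1).factorial) := by ring
          _ = 1 * t.factorial * a.factorial := by rw [h6]; ring

lemma sum_tele (a b : ℕ) (ha : 1 ≤ a) :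
    a * ∑ t ∈ Finset.range (b+1), (b.choose t * t.factorial * (a + b - 1 - t).factorial)
      = (a+b).factorial := by
  rw [Finset.mul_sum]
  have key : ∀ m : ℕ, (∑ t ∈ Finset.range (m+1), a * (b.choose t * t.factorial * (a + b - 1 - t).factorial))
      + b.choose (m+1) * (m+1).factorial * (a + b - (m+1)).factorial = (a+b).factorial := by
    intro m
    induction m with
    | zero =>
      simp only [zero_add, Finset.sum_range_one]
      rw [tele a b ha 0]
      norm_num
    | succ m ih =>
      rw [Finset.sum_range_succ, add_assoc, tele a b ha (m+1)]
      exact ih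
  have h := key b
  rw [Nat.choose_eq_zero_of_lt (Nat.lt_succ_self b)] at h
  simpa using h


lemma per_split {α : Type*} [Fintype α] [DecidableEq α] (A B : Finset α)
    (hA : A.Nonempty) (hB : B.Nonempty) (hU : A ∪ B = Finset.univ) (hI : A ∩ B = ∅)
    (x : α) (hx : x ∈ A) (c : ℝ) :
    (1 / (Nat.factorial (Fintype.card α) : ℝ)) *
      ∑ M ∈ Finset.univ.filter (fun M : Finset α => x ∈ M),
        (Nat.factorial (M.card - 1) : ℝ) * (Nat.factorial (Fintype.card α - M.card) : ℝ) *
          ((if (A ∩ M).Nonempty ∧ (B ∩ M).Nonempty then c else 0)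
            - (if (A ∩ M.erase x).Nonempty ∧ (B ∩ M.erase x).Nonempty then c else 0))
      = ((B.card : ℝ) / ((Fintype.card α : ℝ) * (A.card : ℝ))) * c := by
  classical
  set n := Fintype.card α with hn
  have hxB : x ∉ B := by
    intro hxB
    have : x ∈ A ∩ B := Finset.mem_inter.2 ⟨hx, hxB⟩
    simp [hI] at this
  have hdisj : Disjoint A B := Finset.disjoint_iff_inter_eq_empty.2 hI
  have hab : A.card + B.card = n := by
    rw [← Finset.card_union_of_disjoint hdisj, hU, hn, Finset.card_univ]
  -- Step 1: rewrite each summand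
  have step1 : ∀ M ∈ Finset.univ.filter (fun M : Finset α => x ∈ M),
      (Nat.factorial (M.card - 1) : ℝ) * (Nat.factorial (n - M.card) : ℝ) *
          ((if (A ∩ M).Nonempty ∧ (B ∩ M).Nonempty then c else 0)
            - (if (A ∩ M.erase x).Nonempty ∧ (B ∩ M.erase x).Nonempty then c else 0))
      = (if A ∩ M = {x} ∧ (B ∩ M).Nonempty then
          (Nat.factorial (M.card - 1) : ℝ) * (Nat.factorial (n - M.card) : ℝ) * c else 0) := by
    intro M hM
    rw [Finset.mem_filter] at hM
    have hxM : x ∈ M := hM.2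
    have hxAM : x ∈ A ∩ M := Finset.mem_inter.2 ⟨hx, hxM⟩
    have hAMne : (A ∩ M).Nonempty := ⟨x, hxAM⟩
    have hBe : B ∩ M.erase x = B ∩ M := by
      ext y
      simp only [Finset.mem_inter, Finset.mem_erase]
      constructor
      · rintro ⟨hy, _, hy2⟩; exact ⟨hy, hy2⟩
      · rintro ⟨hy, hy2⟩; exact ⟨hy, fun h => hxB (h ▸ hy), hy2⟩
    have hAe : A ∩ M.erase x = (A ∩ M).erase x := by
      ext y
      simp only [Finset.mem_inter, Finset.mem_erase]
      tauto
    have hkey : (A ∩ M.erase x).Nonempty ↔ A ∩ M ≠ {x} := by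
      rw [hAe, Finset.nonempty_iff_ne_empty, not_iff_not, Finset.erase_eq_empty_iff]
      constructor
      · rintro (h | h)
        · exact absurd h (Finset.nonempty_iff_ne_empty.1 hAMne)
        · exact h
      · intro h; exact Or.inr h
    rw [hBe]
    by_cases h1 : (B ∩ M).Nonempty
    · by_cases h2 : A ∩ M = {x}
      · rw [if_pos ⟨hAMne, h1⟩, if_neg (by rw [hkey]; tauto), if_pos ⟨h2, h1⟩]; ring
      · rw [if_pos ⟨hAMne, h1⟩, if_pos ⟨hkey.2 h2, h1⟩, if_neg (by tauto)]; ring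
    · rw [if_neg (by tauto), if_neg (by tauto), if_neg (by tauto)]; ring
  rw [Finset.sum_congr rfl step1]
  -- Step 2: reindex to a sum over filtered universe with condition Q
  have step2 : ∑ M ∈ Finset.univ.filter (fun M : Finset α => x ∈ M),
      (if A ∩ M = {x} ∧ (B ∩ M).Nonempty then
          (Nat.factorial (M.card - 1) : ℝ) * (Nat.factorial (n - M.card) : ℝ) * c else 0)
      = ∑ M ∈ Finset.univ.filter (fun M : Finset α => A ∩ M = {x} ∧ (B ∩ M).Nonempty),
          (Nat.factorial (M.card - 1) : ℝ) * (Nat.factorial (n - M.card) : ℝ) * c := by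
    rw [Finset.sum_filter, Finset.sum_filter]
    apply Finset.sum_congr rfl
    intro M _
    by_cases hQ : A ∩ M = {x} ∧ (B ∩ M).Nonempty
    · have hxM : x ∈ M := by
        have : x ∈ A ∩ M := hQ.1 ▸ Finset.mem_singleton_self x
        exact (Finset.mem_inter.1 this).2
      rw [if_pos hxM, if_pos hQ]
    · rw [if_neg hQ]
      split_ifs <;> simp_all
  rw [step2]
  -- Step 3: bijection with nonempty subsets of B
  have step3 : ∑ M ∈ Finset.univ.filter (fun M : Finset α => A ∩ M = {x} ∧ (B ∩ M).Nonempty),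
          (Nat.factorial (M.card - 1) : ℝ) * (Nat.factorial (n - M.card) : ℝ) * c
      = ∑ T ∈ B.powerset.filter (fun T => T.Nonempty),
          (Nat.factorial T.card : ℝ) * (Nat.factorial (n - (T.card + 1)) : ℝ) * c := by
    apply Finset.sum_nbij' (fun M => M.erase x) (fun T => insert x T)
    · intro M hM
      rw [Finset.mem_filter] at hM
      obtain ⟨_, hAM, hBM⟩ := hM
      rw [Finset.mem_filter, Finset.mem_powerset]
      constructor
      · intro y hy
        rw [Finset.mem_erase] at hy
        have hyu : y ∈ A ∪ B := hU ▸ Finset.mem_univ y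
        rcases Finset.mem_union.1 hyu with h | h
        · exfalso
          have : y ∈ A ∩ M := Finset.mem_inter.2 ⟨h, hy.2⟩
          rw [hAM, Finset.mem_singleton] at this
          exact hy.1 this
        · exact h
      · obtain ⟨y, hy⟩ := hBM
        rw [Finset.mem_inter] at hy
        refine ⟨y, Finset.mem_erase.2 ⟨fun h => hxB (h ▸ hy.1), hy.2⟩⟩
    · intro T hT
      rw [Finset.mem_filter, Finset.mem_powerset] at hT
      obtain ⟨hTB, hTne⟩ := hT
      have hxT : x ∉ T := fun h => hxB (hTB h)
      rw [Finset.mem_filter]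
      refine ⟨Finset.mem_univ _, ?_, ?_⟩
      · ext y
        simp only [Finset.mem_inter, Finset.mem_insert, Finset.mem_singleton]
        constructor
        · rintro ⟨hyA, hy | hy⟩
          · exact hy
          · exfalso
            have : y ∈ A ∩ B := Finset.mem_inter.2 ⟨hyA, hTB hy⟩
            simp [hI] at this
        · rintro rfl; exact ⟨hx, Or.inl rfl⟩
      · obtain ⟨y, hy⟩ := hTne
        exact ⟨y, Finset.mem_inter.2 ⟨hTB hy, Finset.mem_insert_of_mem hy⟩⟩
    · intro M hM
      rw [Finset.mem_filter] at hM
      have hxM : x ∈ M := by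
        have : x ∈ A ∩ M := hM.2.1 ▸ Finset.mem_singleton_self x
        exact (Finset.mem_inter.1 this).2
      exact Finset.insert_erase hxM
    · intro T hT
      rw [Finset.mem_filter, Finset.mem_powerset] at hT
      exact Finset.erase_insert (fun h => hxB (hT.1 h))
    · intro M hM
      rw [Finset.mem_filter] at hM
      have hxM : x ∈ M := by
        have : x ∈ A ∩ M := hM.2.1 ▸ Finset.mem_singleton_self x
        exact (Finset.mem_inter.1 this).2
      have hcard : (M.erase x).card = M.card - 1 := Finset.card_erase_of_mem hxM
      have hMpos : 1 ≤ M.card := Finset.card_pos.2 ⟨x, hxM⟩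
      rw [hcard]
      have h7 : M.card - 1 + 1 = M.card := by omega
      rw [h7]
  rw [step3]
  have hfilter : B.powerset.filter (fun T => T.Nonempty) = B.powerset.erase ∅ := by
    ext T
    simp only [Finset.mem_filter, Finset.mem_erase, Finset.nonempty_iff_ne_empty]
    tauto
  rw [hfilter]
  have hmem : (∅ : Finset α) ∈ B.powerset := Finset.empty_mem_powerset B
  have step4 : ∑ T ∈ B.powerset.erase ∅,
        ((T.card.factorial : ℝ) * (((n - (T.card + 1)).factorial : ℝ)) * c)
      = (∑ T ∈ B.powerset, ((T.card.factorial : ℝ) * (((n - (T.card + 1)).factorial : ℝ)) * c))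
        - (((n - 1).factorial : ℝ) * c) := by
    rw [← Finset.add_sum_erase _ _ hmem]
    simp
  rw [step4]
  have step5 : ∑ T ∈ B.powerset, ((T.card.factorial : ℝ) * (((n - (T.card + 1)).factorial : ℝ)) * c)
      = ∑ j ∈ Finset.range (B.card + 1),
          ((B.card.choose j * j.factorial * (n - (j+1)).factorial : ℕ) : ℝ) * c := by
    rw [Finset.sum_powerset]
    apply Finset.sum_congr rfl
    intro j hj
    have inner : ∀ T ∈ B.powersetCard j,
        ((T.card.factorial : ℝ) * (((n - (T.card + 1)).factorial : ℝ)) * c)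
        = ((j.factorial : ℝ) * (((n - (j + 1)).factorial : ℝ)) * c) := by
      intro T hT
      rw [(Finset.mem_powersetCard.1 hT).2]
    rw [Finset.sum_congr rfl inner, Finset.sum_const, Finset.card_powersetCard, nsmul_eq_mul]
    push_cast
    ring
  rw [step5, ← Finset.sum_mul, ← Nat.cast_sum]
  set a := A.card with hadef
  set b := B.card with hbdef
  have ha1 : 1 ≤ a := Finset.card_pos.2 hA
  have hb1 : 1 ≤ b := Finset.card_pos.2 hB
  have hsub : ∀ j, n - (j+1) = a + b - 1 - j := by intro j; omega
  have hsum : (∑ j ∈ Finset.range (b + 1), b.choose j * j.factorial * (n - (j+1)).factorial)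
      = ∑ j ∈ Finset.range (b + 1), b.choose j * j.factorial * (a + b - 1 - j).factorial := by
    exact Finset.sum_congr rfl (fun j _ => by rw [hsub j])
  rw [hsum]
  have hnat := sum_tele a b ha1
  have hnab : a + b = n := hab
  set N : ℕ := ∑ j ∈ Finset.range (b + 1), b.choose j * j.factorial * (a + b - 1 - j).factorial with hNdef
  have hN : (a : ℝ) * (N : ℝ) = ((a+b).factorial : ℝ) := by exact_mod_cast congrArg (Nat.cast (R := ℝ)) hnat
  rw [hnab] at hN
  have hn1 : 1 ≤ n := by omega
  have hfac : (n.factorial : ℝ) = (n : ℝ) * ((n-1).factorial : ℝ) := by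
    have h9 : n = (n - 1) + 1 := by omega
    rw [h9, Nat.factorial_succ]
    push_cast
    ring
  have hnz2 : (n : ℝ) ≠ 0 := Nat.cast_ne_zero.2 (by omega)
  have haz : (a : ℝ) ≠ 0 := Nat.cast_ne_zero.2 (by omega)
  have hFz : (((n-1).factorial : ℕ) : ℝ) ≠ 0 := Nat.cast_ne_zero.2 (Nat.factorial_ne_zero _)
  have hnbR : (n : ℝ) = (a : ℝ) + (b : ℝ) := by exact_mod_cast hnab.symm
  have hNval : (N : ℝ) = (n.factorial : ℝ) / (a : ℝ) := by
    rw [eq_div_iff haz]; linarith [hN]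
  rw [hNval, hfac, hnbR]
  field_simp
  ring

lemma per_split_pair {α : Type*} [Fintype α] [DecidableEq α] (A B : Finset α)
    (hA : A.Nonempty) (hB : B.Nonempty) (hU : A ∪ B = Finset.univ) (hI : A ∩ B = ∅)
    (x : α) (hx : x ∈ A) (c : ℝ) :
    (1 / (Nat.factorial (Fintype.card α) : ℝ)) *
      ∑ M ∈ Finset.univ.filter (fun M : Finset α => x ∈ M),
        (Nat.factorial (M.card - 1) : ℝ) * (Nat.factorial (Fintype.card α - M.card) : ℝ) *
          ((if ∀ C ∈ ({A, B} : Finset (Finset α)), (C ∩ M).Nonempty then c else 0)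
            - (if ∀ C ∈ ({A, B} : Finset (Finset α)), (C ∩ M.erase x).Nonempty then c else 0))
      = ∑ A' ∈ ({A, B} : Finset (Finset α)).filter (fun A' => x ∈ A'),
          ∑ B' ∈ ({A, B} : Finset (Finset α)).erase A',
            ((B'.card : ℝ) / ((Fintype.card α : ℝ) * (A'.card : ℝ))) * c := by
  classical
  have hxB : x ∉ B := by
    intro hxB
    have : x ∈ A ∩ B := Finset.mem_inter.2 ⟨hx, hxB⟩
    simp [hI] at this
  have hAB : A ≠ B := by
    intro h
    obtain ⟨y, hy⟩ := hA
    have : y ∈ A ∩ B := Finset.mem_inter.2 ⟨hy, h ▸ hy⟩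
    simp [hI] at this
  have hfil : ({A, B} : Finset (Finset α)).filter (fun A' => x ∈ A') = {A} := by
    ext S
    simp only [Finset.mem_filter, Finset.mem_insert, Finset.mem_singleton]
    constructor
    · rintro ⟨rfl | rfl, h⟩
      · rfl
      · exact absurd h hxB
    · rintro rfl
      exact ⟨Or.inl rfl, hx⟩
  have herase : ({A, B} : Finset (Finset α)).erase A = {B} := by
    rw [show ({A, B} : Finset (Finset α)) = insert A {B} from rfl,
      Finset.erase_insert (by simpa using hAB)]
  rw [hfil, Finset.sum_singleton, herase, Finset.sum_singleton]
  have hcond : ∀ M : Finset α,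
      (∀ C ∈ ({A, B} : Finset (Finset α)), (C ∩ M).Nonempty) ↔
        ((A ∩ M).Nonempty ∧ (B ∩ M).Nonempty) := by
    intro M
    simp [Finset.forall_mem_insert]
  have := per_split A B hA hB hU hI x hx c
  simp only [hcond] at *
  exact this


set_option maxHeartbeats 1000000 in
/-- For a split system `𝒮` with weighting `λ`, the Shapley value of `PD_λ`
satisfies `(SV(PD_λ))(x) = ∑_{A|B ∈ 𝒮, x ∈ A} (|B|/(|X|·|A|))·λ(A|B)`. -/
theorem stmt9 {α : Type*} [Fintype α] [DecidableEq α] [Nonempty α]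
    (𝒮 : Finset (Finset (Finset α))) (h𝒮 : 𝒮.Nonempty)
    (h𝒮' : ∀ S ∈ 𝒮, IsSplit S) (lam : ↥𝒮 → ℝ) (x : α) :
    SV (PDs 𝒮 lam) x
      = ∑ S : ↥𝒮, ∑ A ∈ S.1.filter (fun A => x ∈ A), ∑ B ∈ S.1.erase A,
          ((B.card : ℝ) / ((Fintype.card α : ℝ) * (A.card : ℝ))) * lam S := by
  classical
  unfold SV PDs
  simp only [← Finset.sum_sub_distrib, Finset.mul_sum]
  rw [Finset.sum_comm]
  apply Finset.sum_congr rfl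
  intro S _
  rw [← Finset.mul_sum]
  obtain ⟨A, B, hA, hB, hU, hI, hS⟩ := h𝒮' S.1 S.2
  rw [hS]
  have hxAB : x ∈ A ∨ x ∈ B := by
    have h := Finset.mem_univ x
    rw [← hU, Finset.mem_union] at h
    exact h
  rcases hxAB with hxA | hxB
  · convert per_split_pair A B hA hB hU hI x hxA (lam S) using 3 with M hM
    congr!
  · rw [Finset.pair_comm A B]
    convert per_split_pair B A hB hA (by rw [Finset.union_comm]; exact hU)
      (by rw [Finset.inter_comm]; exact hI) x hxB (lam S) using 3 with M hM
    congr!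
end

section
/- Let 𝒮 be a split system on a nonempty finite set X, let Φ be the fair proportion index on 𝒞(𝒮), and let τ : 𝕃(𝒮) → 𝕃(𝒞(𝒮)) be defined by (τ(λ))(C) = (1/2)·λ(C|(X∖C)) for each C ∈ 𝒞(𝒮). Then Ψ_τ(Φ) = Φ∘τ is a complete linear phylogenetic diversity index on 𝒮, and ((Ψ_τ(Φ))(λ))(x) = Σ_{A|B∈𝒮 with x∈A} λ(A|B)/(2·|A|) holds for all λ ∈ 𝕃(𝒮) and all x ∈ X. -/
open Finset

/-- The cluster system `𝒞(𝒮)` associated with a split system `𝒮`. -/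
def Cl {α : Type*} [DecidableEq α] (𝒮 : Finset (Finset (Finset α))) :
    Finset (Finset α) :=
  𝒮.biUnion id

/-- The fair proportion index on a cluster system `𝒞` on `α`. -/
noncomputable def FPfun {α : Type*} [Fintype α] [DecidableEq α] (𝒞 : Finset (Finset α))
    (ω : ↥𝒞 → ℝ) (x : α) : ℝ :=
  ∑ C : ↥𝒞, if x ∈ C.1 then ω C / (C.1.card : ℝ) else 0

section Helpers

variable {α : Type*} [Fintype α] [DecidableEq α]

lemma split_form {𝒮 : Finset (Finset (Finset α))} (h𝒮' : ∀ S ∈ 𝒮, IsSplit S)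
    {S : Finset (Finset α)} (hS : S ∈ 𝒮) :
    ∃ A : Finset α, A.Nonempty ∧ (Aᶜ).Nonempty ∧ S = {A, Aᶜ} := by
  obtain ⟨A, B, hA, hB, hU, hI, rfl⟩ := h𝒮' _ hS
  have hBA : B = Aᶜ := by
    ext x
    simp only [Finset.mem_compl]
    constructor
    · intro hxB hxA
      have : x ∈ A ∩ B := Finset.mem_inter.2 ⟨hxA, hxB⟩
      simp [hI] at this
    · intro hx
      have : x ∈ A ∪ B := by rw [hU]; exact Finset.mem_univ x
      rcases Finset.mem_union.1 this with h | h
      · exact absurd h hx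
      · exact h
  exact ⟨A, hA, hBA ▸ hB, by rw [hBA]⟩

lemma mem_split {𝒮 : Finset (Finset (Finset α))} (h𝒮' : ∀ S ∈ 𝒮, IsSplit S)
    {S : Finset (Finset α)} (hS : S ∈ 𝒮) {C : Finset α} (hC : C ∈ S) :
    ({C, Cᶜ} : Finset (Finset α)) = S ∧ C.Nonempty := by
  obtain ⟨A, hA, hAc, rfl⟩ := split_form h𝒮' hS
  rcases Finset.mem_insert.1 hC with rfl | h
  · exact ⟨rfl, hA⟩
  · have hCA : C = Aᶜ := by simpa using h
    subst hCA
    refine ⟨?_, hAc⟩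
    rw [compl_compl]
    exact Finset.pair_comm _ _

lemma key_mem {𝒮 : Finset (Finset (Finset α))} (h𝒮' : ∀ S ∈ 𝒮, IsSplit S)
    {C : Finset α} (hC : C ∈ Cl 𝒮) : ({C, Cᶜ} : Finset (Finset α)) ∈ 𝒮 := by
  obtain ⟨S, hS, hCS⟩ := Finset.mem_biUnion.1 hC
  rw [(mem_split h𝒮' hS hCS).1]; exact hS

lemma split_card {𝒮 : Finset (Finset (Finset α))} (h𝒮' : ∀ S ∈ 𝒮, IsSplit S)
    {S : Finset (Finset α)} (hS : S ∈ 𝒮) : S.card = 2 := by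
  obtain ⟨A, hA, hAc, rfl⟩ := split_form h𝒮' hS
  rw [Finset.card_insert_of_notMem, Finset.card_singleton]
  simp only [Finset.mem_singleton]
  intro h
  obtain ⟨a, ha⟩ := hA
  rw [h] at ha
  exact (Finset.mem_compl.1 ha) (h ▸ ha)

lemma biUnion_sum {𝒮 : Finset (Finset (Finset α))} (h𝒮' : ∀ S ∈ 𝒮, IsSplit S)
    (F : Finset α → ℝ) :
    ∑ C ∈ Cl 𝒮, F C = ∑ S ∈ 𝒮, ∑ C ∈ S, F C := by
  apply Finset.sum_biUnion
  intro S₁ h₁ S₂ h₂ hne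
  simp only [id, Function.onFun]
  rw [Finset.disjoint_left]
  intro C hC1 hC2
  exact hne ((mem_split h𝒮' h₁ hC1).1.symm.trans (mem_split h𝒮' h₂ hC2).1)

/-- Extension of a weighting on `𝒮` to all finsets. -/
noncomputable def Lext (𝒮 : Finset (Finset (Finset α))) (lam : ↥𝒮 → ℝ)
    (S : Finset (Finset α)) : ℝ :=
  if h : S ∈ 𝒮 then lam ⟨S, h⟩ else 0

lemma Lext_sum (𝒮 : Finset (Finset (Finset α))) (lam : ↥𝒮 → ℝ) :
    ∑ S ∈ 𝒮, Lext 𝒮 lam S = ∑ S : ↥𝒮, lam S := by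
  rw [← Finset.sum_attach 𝒮 (Lext 𝒮 lam), Finset.univ_eq_attach]
  apply Finset.sum_congr rfl
  intro S _
  simp [Lext, S.2]

lemma heval {𝒮 : Finset (Finset (Finset α))} (h𝒮' : ∀ S ∈ 𝒮, IsSplit S)
    (τ : (↥𝒮 → ℝ) → (↥(Cl 𝒮) → ℝ))
    (hτ : ∀ (lam : ↥𝒮 → ℝ) (C : ↥(Cl 𝒮))
        (hS : ({C.1, C.1ᶜ} : Finset (Finset α)) ∈ 𝒮),
      τ lam C = (1 / 2) * lam ⟨{C.1, C.1ᶜ}, hS⟩)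
    (lam : ↥𝒮 → ℝ) (x : α) :
    FPfun (Cl 𝒮) (τ lam) x
      = ∑ S ∈ 𝒮, ∑ C ∈ S,
          (if x ∈ C then Lext 𝒮 lam S / (2 * (C.card : ℝ)) else 0) := by
  unfold FPfun
  rw [Finset.univ_eq_attach]
  have h1 : ∀ C ∈ (Cl 𝒮).attach,
      (if x ∈ C.1 then τ lam C / (C.1.card : ℝ) else 0)
        = (fun D => if x ∈ D then Lext 𝒮 lam ({D, Dᶜ} : Finset (Finset α)) / (2 * (D.card : ℝ)) else 0) C.1 := by
    intro C _
    have hk := key_mem h𝒮' C.2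
    rw [hτ lam C hk]
    simp only [Lext, dif_pos hk]
    split_ifs with h
    · ring
    · rfl
  rw [Finset.sum_congr rfl h1, Finset.sum_attach (Cl 𝒮)
    (fun D => if x ∈ D then Lext 𝒮 lam ({D, Dᶜ} : Finset (Finset α)) / (2 * (D.card : ℝ)) else 0),
    biUnion_sum h𝒮']
  apply Finset.sum_congr rfl
  intro S hS
  apply Finset.sum_congr rfl
  intro C hC
  rw [(mem_split h𝒮' hS hC).1]

end Helpers

/-- If `Φ` is the fair proportion index on `𝒞(𝒮)` and `(τ λ)(C) = (1/2)·λ(C|(X∖C))`,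
then `Ψ_τ(Φ) = Φ ∘ τ` is a complete linear phylogenetic diversity index on `𝒮`, and
`((Ψ_τ(Φ))(λ))(x) = ∑_{A|B ∈ 𝒮, x ∈ A} λ(A|B)/(2·|A|)`. -/
theorem stmt12 {α : Type*} [Fintype α] [DecidableEq α] [Nonempty α]
    (𝒮 : Finset (Finset (Finset α))) (h𝒮 : 𝒮.Nonempty)
    (h𝒮' : ∀ S ∈ 𝒮, IsSplit S)
    (τ : (↥𝒮 → ℝ) → (↥(Cl 𝒮) → ℝ))
    (hτ : ∀ (lam : ↥𝒮 → ℝ) (C : ↥(Cl 𝒮))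
        (hS : ({C.1, C.1ᶜ} : Finset (Finset α)) ∈ 𝒮),
      τ lam C = (1 / 2) * lam ⟨{C.1, C.1ᶜ}, hS⟩) :
    -- Ψ_τ(Φ) is linear
    (∀ (a : ℝ) (lam₁ lam₂ : ↥𝒮 → ℝ),
        FPfun (Cl 𝒮) (τ (a • lam₁ + lam₂))
          = a • FPfun (Cl 𝒮) (τ lam₁) + FPfun (Cl 𝒮) (τ lam₂))
    -- Ψ_τ(Φ) is complete
    ∧ (∀ lam : ↥𝒮 → ℝ, ∑ x : α, FPfun (Cl 𝒮) (τ lam) x = ∑ S : ↥𝒮, lam S)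
    -- explicit formula
    ∧ (∀ (lam : ↥𝒮 → ℝ) (x : α),
        FPfun (Cl 𝒮) (τ lam) x
          = ∑ S : ↥𝒮, ∑ A ∈ S.1.filter (fun A => x ∈ A),
              lam S / (2 * (A.card : ℝ))) := by
  refine ⟨?_, ?_, ?_⟩
  · -- linearity
    intro a lam₁ lam₂
    funext x
    have hlin : ∀ C : ↥(Cl 𝒮),
        τ (a • lam₁ + lam₂) C = a * τ lam₁ C + τ lam₂ C := by
      intro C
      have hk := key_mem h𝒮' C.2
      rw [hτ _ C hk, hτ _ C hk, hτ _ C hk]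
      simp only [Pi.add_apply, Pi.smul_apply, smul_eq_mul]
      ring
    simp only [FPfun, Pi.add_apply, Pi.smul_apply, smul_eq_mul]
    rw [Finset.mul_sum, ← Finset.sum_add_distrib]
    apply Finset.sum_congr rfl
    intro C _
    rw [hlin C]
    split_ifs with h
    · ring
    · simp
  · -- completeness
    intro lam
    have h1 : ∀ x : α, FPfun (Cl 𝒮) (τ lam) x
        = ∑ S ∈ 𝒮, ∑ C ∈ S,
            (if x ∈ C then Lext 𝒮 lam S / (2 * (C.card : ℝ)) else 0) :=
      fun x => heval h𝒮' τ hτ lam x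
    calc ∑ x : α, FPfun (Cl 𝒮) (τ lam) x
        = ∑ S ∈ 𝒮, ∑ C ∈ S, ∑ x : α,
            (if x ∈ C then Lext 𝒮 lam S / (2 * (C.card : ℝ)) else 0) := by
          simp only [h1]
          rw [Finset.sum_comm]
          apply Finset.sum_congr rfl
          intro S _
          rw [Finset.sum_comm]
      _ = ∑ S ∈ 𝒮, ∑ C ∈ S, Lext 𝒮 lam S / 2 := by
          apply Finset.sum_congr rfl
          intro S hS
          apply Finset.sum_congr rfl
          intro C hC
          have hne : C.Nonempty := (mem_split h𝒮' hS hC).2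
          have hcard : (C.card : ℝ) ≠ 0 := by
            exact_mod_cast Finset.card_ne_zero_of_mem hne.choose_spec
          rw [Finset.sum_ite_mem, Finset.univ_inter, Finset.sum_const, nsmul_eq_mul]
          field_simp
      _ = ∑ S ∈ 𝒮, Lext 𝒮 lam S := by
          apply Finset.sum_congr rfl
          intro S hS
          rw [Finset.sum_const, split_card h𝒮' hS, nsmul_eq_mul]
          push_cast
          ring
      _ = ∑ S : ↥𝒮, lam S := Lext_sum 𝒮 lam
  · -- explicit formula
    intro lam x
    rw [heval h𝒮' τ hτ lam x, ← Finset.sum_attach 𝒮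
      (fun S => ∑ C ∈ S, (if x ∈ C then Lext 𝒮 lam S / (2 * (C.card : ℝ)) else 0)),
      Finset.univ_eq_attach]
    apply Finset.sum_congr rfl
    intro S _
    rw [Finset.sum_filter]
    apply Finset.sum_congr rfl
    intro C _
    simp [Lext, S.2]
end

section
/- For every cluster system 𝒞 on a nonempty finite set X, the equal splits index ES is a complete linear phylogenetic diversity index on 𝕃(𝒞); that is, ES is ℝ-linear and Σ_{x∈X} (ES(ω))(x) = Σ_{C∈𝒞} ω(C) for all ω ∈ 𝕃(𝒞). -/
open Finset

/-- The elements of `C` not contained in any child of `C`. -/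
def cl {α : Type*} [DecidableEq α] (𝒞 : Finset (Finset α)) (C : Finset α) :
    Finset α :=
  C.filter fun x => ∀ C' ∈ ch 𝒞 C, x ∉ C'

/-- The equal splits coefficients `m_x(C)`, defined recursively. -/
noncomputable def m {α : Type*} [DecidableEq α] (𝒞 : Finset (Finset α)) (x : α)
    (C : Finset α) : ℝ :=
  if x ∉ C then 0
  else if x ∈ cl 𝒞 C then 1 / (((ch 𝒞 C).card : ℝ) + ((cl 𝒞 C).card : ℝ))
  else ∑ C' ∈ (ch 𝒞 C).attach,
    m 𝒞 x C'.1 / (((ch 𝒞 C).card : ℝ) + ((cl 𝒞 C).card : ℝ))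
termination_by C.card
decreasing_by
  have h : C'.1 ⊂ C := by
    have h2 := C'.2
    simp only [ch, Finset.mem_filter] at h2
    exact h2.2.1
  exact Finset.card_lt_card h

/-- The equal splits index on a cluster system `𝒞`:
`(ES ω)(x) = ∑_{C ∈ 𝒞} m_x(C)·ω(C)`. -/
noncomputable def ES {α : Type*} [DecidableEq α] (𝒞 : Finset (Finset α))
    (ω : ↥𝒞 → ℝ) (x : α) : ℝ :=
  ∑ C : ↥𝒞, m 𝒞 x C.1 * ω C


/-!
Linearity is immediate, since `ES` is multiplication by the matrix `(m_x(C))`. Completeness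
reduces to `∑ₓ m_x(C) = 1` for every cluster `C`, proved by strong induction on `C`: with
`d = |ch(C)| + |cl(C)|`, each element of `cl(C)` receives `1/d`, and each child `C'`
passes on `1/d` times its own total, which is `1` by induction.
-/

section

variable {α : Type*} [DecidableEq α] (𝒞 : Finset (Finset α))

lemma ssubset_of_mem_ch {C C' : Finset α} (h : C' ∈ ch 𝒞 C) : C' ⊂ C :=
  (mem_filter.1 h).2.1

lemma mem_of_mem_ch {C C' : Finset α} (h : C' ∈ ch 𝒞 C) : C' ∈ 𝒞 :=
  (mem_filter.1 h).1

lemma cl_subset (C : Finset α) : cl 𝒞 C ⊆ C := filter_subset _ _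

lemma subset_sdiff_cl_of_mem_ch {C C' : Finset α} (h : C' ∈ ch 𝒞 C) :
    C' ⊆ C \ cl 𝒞 C := fun _ hx =>
  mem_sdiff.2 ⟨(ssubset_of_mem_ch 𝒞 h).1 hx, fun hcl => (mem_filter.1 hcl).2 C' h hx⟩

lemma card_ch_add_card_cl_pos {C : Finset α} (hC : C.Nonempty) :
    0 < #(ch 𝒞 C) + #(cl 𝒞 C) := by
  obtain ⟨x, hx⟩ := hC
  by_cases hxcl : x ∈ cl 𝒞 C
  · exact Nat.add_pos_right _ (card_pos.2 ⟨x, hxcl⟩)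
  · obtain ⟨C', hC', -⟩ : ∃ C' ∈ ch 𝒞 C, x ∈ C' := by simpa [cl, hx] using hxcl
    exact Nat.add_pos_left (card_pos.2 ⟨C', hC'⟩) _

lemma m_of_notMem {x : α} {C : Finset α} (hx : x ∉ C) : m 𝒞 x C = 0 := by
  rw [m]; simp [hx]

lemma m_of_mem_cl {x : α} {C : Finset α} (hx : x ∈ cl 𝒞 C) :
    m 𝒞 x C = 1 / (#(ch 𝒞 C) + #(cl 𝒞 C) : ℝ) := by
  rw [m]; simp [cl_subset 𝒞 C hx, hx]

lemma m_of_mem_sdiff_cl {x : α} {C : Finset α} (hx : x ∈ C \ cl 𝒞 C) :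
    m 𝒞 x C = (∑ C' ∈ ch 𝒞 C, m 𝒞 x C') / (#(ch 𝒞 C) + #(cl 𝒞 C) : ℝ) := by
  rw [mem_sdiff] at hx
  rw [m, sum_div, if_neg (not_not.2 hx.1), if_neg hx.2]
  exact sum_attach (ch 𝒞 C) fun C' => m 𝒞 x C' / _

lemma sum_m_eq_sum_of_subset [Fintype α] {s C : Finset α} (h : C ⊆ s) :
    ∑ x ∈ s, m 𝒞 x C = ∑ x, m 𝒞 x C :=
  sum_subset (subset_univ s) fun _ _ hx => m_of_notMem 𝒞 fun hC => hx (h hC)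

theorem sum_m_eq_one [Fintype α] (h𝒞 : ∀ C ∈ 𝒞, C.Nonempty) {C : Finset α} (hC : C ∈ 𝒞) :
    ∑ x, m 𝒞 x C = 1 := by
  induction C using Finset.strongInduction with
  | H C ih =>
  set d : ℝ := #(ch 𝒞 C) + #(cl 𝒞 C)
  have hd : d ≠ 0 := by unfold d; exact_mod_cast (card_ch_add_card_cl_pos 𝒞 (h𝒞 C hC)).ne'
  have h_cl : ∑ x ∈ cl 𝒞 C, m 𝒞 x C = #(cl 𝒞 C) / d := by
    rw [sum_congr rfl fun x hx => m_of_mem_cl 𝒞 hx, sum_const, nsmul_eq_mul, mul_one_div]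
  have h_rest : ∑ x ∈ C \ cl 𝒞 C, m 𝒞 x C = #(ch 𝒞 C) / d := by
    have h_child : ∀ C' ∈ ch 𝒞 C, ∑ x ∈ C \ cl 𝒞 C, m 𝒞 x C' = 1 := fun C' hC' => by
      rw [sum_m_eq_sum_of_subset 𝒞 (subset_sdiff_cl_of_mem_ch 𝒞 hC')]
      exact ih C' (ssubset_of_mem_ch 𝒞 hC') (mem_of_mem_ch 𝒞 hC')
    rw [sum_congr rfl fun x hx => m_of_mem_sdiff_cl 𝒞 hx, ← sum_div, sum_comm,
      sum_congr rfl h_child, sum_const, nsmul_one]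
  rw [← sum_m_eq_sum_of_subset 𝒞 (subset_refl C), ← sum_sdiff (cl_subset 𝒞 C), h_cl, h_rest,
    ← add_div, div_self hd]

lemma ES_eq_mulVec (ω : 𝒞 → ℝ) : ES 𝒞 ω = (Matrix.of fun x (C : 𝒞) => m 𝒞 x C).mulVec ω := rfl

lemma sum_ES [Fintype α] (ω : 𝒞 → ℝ) :
    ∑ x, ES 𝒞 ω x = ∑ C : 𝒞, (∑ x, m 𝒞 x C) * ω C := by
  simp only [ES, sum_mul]
  exact sum_comm

end

theorem stmt14_general {α : Type*} [Fintype α] [DecidableEq α]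
    (𝒞 : Finset (Finset α)) (h𝒞' : ∀ C ∈ 𝒞, C.Nonempty) :
    (∀ (a : ℝ) (ω₁ ω₂ : ↥𝒞 → ℝ),
        ES 𝒞 (a • ω₁ + ω₂) = a • ES 𝒞 ω₁ + ES 𝒞 ω₂)
    ∧ (∀ ω : ↥𝒞 → ℝ, ∑ x : α, ES 𝒞 ω x = ∑ C : ↥𝒞, ω C) := by
  refine ⟨fun a ω₁ ω₂ => ?_, fun ω => ?_⟩
  · simp only [ES_eq_mulVec, Matrix.mulVec_add, Matrix.mulVec_smul]
  · simp only [sum_ES, sum_m_eq_one 𝒞 h𝒞' (coe_mem _), one_mul]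

/-- The equal splits index on any cluster system is a complete linear phylogenetic
diversity index. -/
theorem stmt14 {α : Type*} [Fintype α] [DecidableEq α] [Nonempty α]
    (𝒞 : Finset (Finset α)) (h𝒞 : 𝒞.Nonempty) (h𝒞' : ∀ C ∈ 𝒞, C.Nonempty) :
    (∀ (a : ℝ) (ω₁ ω₂ : ↥𝒞 → ℝ),
        ES 𝒞 (a • ω₁ + ω₂) = a • ES 𝒞 ω₁ + ES 𝒞 ω₂)
    ∧ (∀ ω : ↥𝒞 → ℝ, ∑ x : α, ES 𝒞 ω x = ∑ C : ↥𝒞, ω C) :=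
  stmt14_general 𝒞 h𝒞'
end

section
/- Let 𝒞 be a cluster system on a nonempty finite set X. Then the linear map 𝕃(𝒞) → ℝ^{𝒫(X)} sending ω to the game PD_ω is injective; that is, if PD_{ω₁}(M) = PD_{ω₂}(M) for all M ⊆ X, then ω₁ = ω₂. -/
open Finset

/-- The game `PD_ω` for a weighting `ω` of a cluster system `𝒞`:
`PD_ω(M) = ∑_{C ∈ 𝒞, M ∩ C ≠ ∅} ω(C)`. -/
noncomputable def PDgame {α : Type*} [DecidableEq α] (𝒞 : Finset (Finset α))
    (ω : ↥𝒞 → ℝ) (M : Finset α) : ℝ :=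
  ∑ C : ↥𝒞, if (M ∩ C.1).Nonempty then ω C else 0

/-- The linear map `ω ↦ PD_ω` from `𝕃(𝒞)` to `ℝ^{𝒫(X)}` is injective. -/
theorem stmt16 {α : Type*} [Fintype α] [DecidableEq α] [Nonempty α]
    (𝒞 : Finset (Finset α)) (h𝒞 : 𝒞.Nonempty) (h𝒞' : ∀ C ∈ 𝒞, C.Nonempty) :
    ∀ ω₁ ω₂ : ↥𝒞 → ℝ,
      (∀ M : Finset α, PDgame 𝒞 ω₁ M = PDgame 𝒞 ω₂ M) → ω₁ = ω₂ := by
  intro ω₁ ω₂ h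
  set δ : ↥𝒞 → ℝ := fun C => ω₁ C - ω₂ C with hδ
  have hPD : ∀ M : Finset α, ∑ C : ↥𝒞, (if (M ∩ C.1).Nonempty then δ C else 0) = 0 := by
    intro M
    have hM := h M
    unfold PDgame at hM
    calc ∑ C : ↥𝒞, (if (M ∩ C.1).Nonempty then δ C else 0)
        = ∑ C : ↥𝒞, ((if (M ∩ C.1).Nonempty then ω₁ C else 0)
            - (if (M ∩ C.1).Nonempty then ω₂ C else 0)) := by
          apply Finset.sum_congr rfl
          intro C _
          split <;> simp [hδ]
      _ = 0 := by rw [Finset.sum_sub_distrib, hM, sub_self]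
  -- `g M = ∑ over clusters contained in M`
  have hg : ∀ M : Finset α, ∑ C : ↥𝒞, (if C.1 ⊆ M then δ C else 0) = 0 := by
    intro M
    have h1 := hPD Finset.univ
    have h2 := hPD Mᶜ
    have key : (∑ C : ↥𝒞, (if (Finset.univ ∩ C.1).Nonempty then δ C else 0))
        - (∑ C : ↥𝒞, (if (Mᶜ ∩ C.1).Nonempty then δ C else 0))
        = ∑ C : ↥𝒞, (if C.1 ⊆ M then δ C else 0) := by
      rw [← Finset.sum_sub_distrib]
      apply Finset.sum_congr rfl
      intro C _
      have hCne : C.1.Nonempty := h𝒞' C.1 C.2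
      have huniv : (Finset.univ ∩ C.1).Nonempty := by
        rwa [Finset.univ_inter]
      by_cases hc : C.1 ⊆ M
      · have : ¬ (Mᶜ ∩ C.1).Nonempty := by
          simp only [Finset.not_nonempty_iff_eq_empty, Finset.eq_empty_iff_forall_notMem]
          intro x hx
          simp only [Finset.mem_inter, Finset.mem_compl] at hx
          exact hx.1 (hc hx.2)
        rw [if_pos huniv, if_neg this, if_pos hc, sub_zero]
      · have : (Mᶜ ∩ C.1).Nonempty := by
          rw [Finset.not_subset] at hc
          obtain ⟨x, hxC, hxM⟩ := hc
          exact ⟨x, Finset.mem_inter.mpr ⟨Finset.mem_compl.mpr hxM, hxC⟩⟩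
        rw [if_pos huniv, if_pos this, if_neg hc, sub_self]
    rw [h1, h2] at key
    rw [← key]; ring
  have key : ∀ n : ℕ, ∀ C : ↥𝒞, C.1.card ≤ n → δ C = 0 := by
    intro n
    induction n with
    | zero =>
      intro C hC
      have := (h𝒞' C.1 C.2).card_pos
      omega
    | succ n ih =>
      intro C hC
      have hgC := hg C.1
      have hsum : ∑ D : ↥𝒞, (if D.1 ⊆ C.1 then δ D else 0) = δ C := by
        rw [Finset.sum_eq_single C]
        · simp
        · intro D _ hDC
          by_cases hsub : D.1 ⊆ C.1
          · have hne : D.1 ≠ C.1 := fun he => hDC (Subtype.ext he)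
            have hss : D.1 ⊂ C.1 := Finset.ssubset_iff_subset_ne.mpr ⟨hsub, hne⟩
            have hcard : D.1.card < C.1.card := Finset.card_lt_card hss
            have := ih D (by omega)
            simp [hsub, this]
          · simp [hsub]
        · intro hC'
          exact absurd (Finset.mem_univ C) hC'
      rw [hsum] at hgC
      exact hgC
  funext C
  have := key C.1.card C le_rfl
  have : ω₁ C - ω₂ C = 0 := this
  linarith
end
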